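/- arXiv:1112.3818 — 2 statements merged into one kernel-verified Lean document; each statement's English description precedes it below -/
import Mathlib

section
/- For every t ∈ ℝ, the function s ↦ a(t−s) u(s) is Bochner integrable on (−∞, t); for every κ ≥ 0 the state variable x(t,κ) := ∫_{−∞}^t e^{−κ(t−s)} u(s) ds is a well-defined Bochner integral in H; the map κ ↦ x(t,κ) is Bochner integrable with respect to ν on [0,∞); and the identity ∫_{−∞}^t a(t−s) u(s) ds = ∫_{[0,∞)} x(t,κ) ν(dκ) holds in H. -/
/-!
Write `a = laplaceKernel ν`. Everything follows from Fubini for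
`(s, κ) ↦ e^{-κ(t-s)} u(s)` on `(-∞, t) × [0, ∞)`, whose inner norm integral over `κ` is
`a(t-s) ‖u(s)‖`. This is integrable: on `(-∞, t-1)` the kernel is bounded by `a(1)` (it is
antitone) and `u` decays exponentially, while on `[t-1, t)` the history `u` is bounded and `a` is
integrable on `(0, 1)`. Fubini applies because `ν` restricted to `[0, ∞)` is σ-finite, `κ ↦ e^{-κ}`
being a positive integrable function there.
-/

open MeasureTheory Set

theorem sigmaFinite_of_integrable_pos {α : Type*} [MeasurableSpace α] {μ : Measure α}
    {f : α → ℝ} (hf : Integrable f μ) (hpos : ∀ x, 0 < f x) : SigmaFinite μ := by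
  refine ⟨⟨⟨fun n : ℕ => {x | 1 / ((n : ℝ) + 1) ≤ f x}, fun _ => trivial,
    fun n => hf.measure_ge_lt_top Nat.one_div_pos_of_nat, ?_⟩⟩⟩
  exact iUnion_eq_univ_iff.2 fun x => (exists_nat_one_div_lt (hpos x)).imp fun _ h => h.le

theorem exists_norm_le_mul_exp_of_continuous {E : Type*} [SeminormedAddCommGroup E]
    {u : ℝ → E} (hu : Continuous u) {M ω : ℝ} (hω : 0 ≤ ω)
    (hbound : ∀ s ≤ 0, ‖u s‖ ≤ M * Real.exp (ω * s)) (t : ℝ) :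
    ∃ C, 0 ≤ C ∧ ∀ s ≤ t, ‖u s‖ ≤ C * Real.exp (ω * s) := by
  obtain ⟨K, hK⟩ := (isCompact_Icc (a := 0) (b := t)).exists_bound_of_continuousOn hu.continuousOn
  set C := max (max M K) 0
  have hMC : M ≤ C := (le_max_left _ _).trans (le_max_left _ _)
  have hKC : K ≤ C := (le_max_right _ _).trans (le_max_left _ _)
  have hC : 0 ≤ C := le_max_right _ _
  refine ⟨C, hC, fun s hs => ?_⟩
  rcases le_or_gt s 0 with hs0 | hs0
  · exact (hbound s hs0).trans <| by gcongr
  · calc ‖u s‖ ≤ C * 1 := by rw [mul_one]; exact (hK s ⟨hs0.le, hs⟩).trans hKC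
      _ ≤ C * Real.exp (ω * s) := by gcongr; exact Real.one_le_exp (by positivity)

noncomputable def laplaceKernel (ν : Measure ℝ) (τ : ℝ) : ℝ :=
  ∫ κ in Ici 0, Real.exp (-κ * τ) ∂ν

section LaplaceKernel

variable {ν : Measure ℝ}

theorem laplaceKernel_nonneg (τ : ℝ) : 0 ≤ laplaceKernel ν τ :=
  integral_nonneg fun _ => (Real.exp_pos _).le

theorem laplaceKernel_le_of_le {τ₁ τ₂ : ℝ}
    (h₁ : IntegrableOn (fun κ => Real.exp (-κ * τ₁)) (Ici 0) ν)
    (h₂ : IntegrableOn (fun κ => Real.exp (-κ * τ₂)) (Ici 0) ν) (hτ : τ₁ ≤ τ₂) :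
    laplaceKernel ν τ₂ ≤ laplaceKernel ν τ₁ :=
  setIntegral_mono_on h₂ h₁ measurableSet_Ici fun κ (hκ : 0 ≤ κ) =>
    Real.exp_le_exp.2 (by nlinarith)

theorem integrableOn_laplaceKernel_sub_Ioo
    (ha1 : IntegrableOn (laplaceKernel ν) (Ioo 0 1)) (t : ℝ) :
    IntegrableOn (fun s => laplaceKernel ν (t - s)) (Ioo (t - 1) t) := by
  have h := ((intervalIntegrable_iff_integrableOn_Ioo_of_le zero_le_one).2 ha1).comp_sub_left t
  rw [sub_zero] at h
  exact (intervalIntegrable_iff_integrableOn_Ioo_of_le (by linarith)).1 h.symm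

theorem stronglyMeasurable_laplaceKernel [SFinite (ν.restrict (Ici 0))] :
    StronglyMeasurable (laplaceKernel ν) :=
  (Continuous.stronglyMeasurable (f := Function.uncurry fun τ κ : ℝ => Real.exp (-κ * τ))
    (by fun_prop)).integral_prod_right

end LaplaceKernel

section History

variable {E : Type*} [NormedAddCommGroup E] {u : ℝ → E} {C ω t : ℝ}

theorem integrableOn_exp_mul_Iio (hω : 0 < ω) (t : ℝ) :
    IntegrableOn (fun s => Real.exp (ω * s)) (Iio t) :=
  (integrableOn_exp_mul_Iic hω t).mono_set Iio_subset_Iic_self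

theorem integrableOn_exp_smul_of_norm_le [NormedSpace ℝ E] (hu : Continuous u) (hω : 0 < ω)
    (hC : ∀ s ≤ t, ‖u s‖ ≤ C * Real.exp (ω * s)) {κ : ℝ} (hκ : 0 ≤ κ) :
    IntegrableOn (fun s => Real.exp (-κ * (t - s)) • u s) (Iio t) := by
  refine ((integrableOn_exp_mul_Iio hω t).const_mul C).mono'
    (by fun_prop : Continuous _).aestronglyMeasurable.restrict ?_
  refine (ae_restrict_iff' measurableSet_Iio).2 (ae_of_all _ fun s (hs : s < t) => ?_)
  have hexp : Real.exp (-κ * (t - s)) ≤ 1 := Real.exp_le_one_iff.2 (by nlinarith)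
  calc ‖Real.exp (-κ * (t - s)) • u s‖ = Real.exp (-κ * (t - s)) * ‖u s‖ := by
        rw [norm_smul, Real.norm_of_nonneg (Real.exp_pos _).le]
    _ ≤ 1 * (C * Real.exp (ω * s)) := by gcongr; exact hC s hs.le
    _ = C * Real.exp (ω * s) := one_mul _

variable {ν : Measure ℝ} [SFinite (ν.restrict (Ici 0))]

theorem stronglyMeasurable_laplaceKernel_sub_mul_norm (hu : Continuous u) (t : ℝ) :
    StronglyMeasurable fun s => laplaceKernel ν (t - s) * ‖u s‖ :=
  (stronglyMeasurable_laplaceKernel.comp_measurable (measurable_const.sub measurable_id)).mul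
    hu.norm.stronglyMeasurable

theorem integrableOn_laplaceKernel_sub_mul_norm_Iio_sub_one (hu : Continuous u) (hω : 0 < ω)
    (hC : ∀ s ≤ t, ‖u s‖ ≤ C * Real.exp (ω * s))
    (haInt : ∀ τ, 0 < τ → IntegrableOn (fun κ => Real.exp (-κ * τ)) (Ici 0) ν) :
    IntegrableOn (fun s => laplaceKernel ν (t - s) * ‖u s‖) (Iio (t - 1)) := by
  refine (((integrableOn_exp_mul_Iio hω t).mono_set (Iio_subset_Iio (by linarith))).const_mul
    (laplaceKernel ν 1 * C)).mono' ?_ ?_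
  · exact (stronglyMeasurable_laplaceKernel_sub_mul_norm hu t).aestronglyMeasurable.restrict
  refine (ae_restrict_iff' measurableSet_Iio).2 (ae_of_all _ fun s (hs : s < t - 1) => ?_)
  have hA : laplaceKernel ν (t - s) ≤ laplaceKernel ν 1 :=
    laplaceKernel_le_of_le (haInt 1 one_pos) (haInt _ (by linarith)) (by linarith)
  rw [Real.norm_of_nonneg (mul_nonneg (laplaceKernel_nonneg _) (norm_nonneg _))]
  calc laplaceKernel ν (t - s) * ‖u s‖ ≤ laplaceKernel ν 1 * (C * Real.exp (ω * s)) := by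
        gcongr
        · exact laplaceKernel_nonneg 1
        · exact hC s (by linarith)
    _ = laplaceKernel ν 1 * C * Real.exp (ω * s) := by ring

theorem integrableOn_laplaceKernel_sub_mul_norm_Ico (hu : Continuous u) (hω : 0 ≤ ω) (hC₀ : 0 ≤ C)
    (hC : ∀ s ≤ t, ‖u s‖ ≤ C * Real.exp (ω * s))
    (ha1 : IntegrableOn (laplaceKernel ν) (Ioo 0 1)) :
    IntegrableOn (fun s => laplaceKernel ν (t - s) * ‖u s‖) (Ico (t - 1) t) := by
  rw [integrableOn_Ico_iff_integrableOn_Ioo]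
  refine ((integrableOn_laplaceKernel_sub_Ioo ha1 t).mul_const (C * Real.exp (ω * t))).mono' ?_ ?_
  · exact (stronglyMeasurable_laplaceKernel_sub_mul_norm hu t).aestronglyMeasurable.restrict
  refine (ae_restrict_iff' measurableSet_Ioo).2 (ae_of_all _ fun s (hs : s ∈ Ioo (t - 1) t) => ?_)
  rw [Real.norm_of_nonneg (mul_nonneg (laplaceKernel_nonneg _) (norm_nonneg _))]
  gcongr
  · exact laplaceKernel_nonneg _
  · exact (hC s hs.2.le).trans (by gcongr; exact hs.2.le)

theorem integrableOn_laplaceKernel_sub_mul_norm (hu : Continuous u) (hω : 0 < ω) (hC₀ : 0 ≤ C)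
    (hC : ∀ s ≤ t, ‖u s‖ ≤ C * Real.exp (ω * s))
    (haInt : ∀ τ, 0 < τ → IntegrableOn (fun κ => Real.exp (-κ * τ)) (Ici 0) ν)
    (ha1 : IntegrableOn (laplaceKernel ν) (Ioo 0 1)) :
    IntegrableOn (fun s => laplaceKernel ν (t - s) * ‖u s‖) (Iio t) := by
  rw [← Iio_union_Ico_eq_Iio (sub_le_self t zero_le_one)]
  exact (integrableOn_laplaceKernel_sub_mul_norm_Iio_sub_one hu hω hC haInt).union
    (integrableOn_laplaceKernel_sub_mul_norm_Ico hu hω.le hC₀ hC ha1)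

theorem integrable_exp_smul_prod [NormedSpace ℝ E] (hu : Continuous u) (hω : 0 < ω)
    (hC₀ : 0 ≤ C) (hC : ∀ s ≤ t, ‖u s‖ ≤ C * Real.exp (ω * s))
    (haInt : ∀ τ, 0 < τ → IntegrableOn (fun κ => Real.exp (-κ * τ)) (Ici 0) ν)
    (ha1 : IntegrableOn (laplaceKernel ν) (Ioo 0 1)) :
    Integrable (Function.uncurry fun s κ => Real.exp (-κ * (t - s)) • u s)
      ((volume.restrict (Iio t)).prod (ν.restrict (Ici 0))) := by
  refine (integrable_prod_iff (by fun_prop : Continuous _).aestronglyMeasurable).2 ⟨?_, ?_⟩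
  · filter_upwards [ae_restrict_mem measurableSet_Iio] with s (hs : s < t)
    exact (haInt (t - s) (sub_pos.2 hs)).smul_const (u s)
  · refine (integrableOn_laplaceKernel_sub_mul_norm hu hω hC₀ hC haInt ha1).congr
      (ae_of_all _ fun s => ?_)
    simp only [Function.uncurry, norm_smul, Real.norm_of_nonneg (Real.exp_pos _).le]
    exact (integral_mul_const _ _).symm

end History

theorem stmt4_general
    {H : Type*} [NormedAddCommGroup H] [InnerProductSpace ℝ H]
    [CompleteSpace H]
    (ν : Measure ℝ)
    (haInt : ∀ t : ℝ, 0 < t →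
      IntegrableOn (fun κ : ℝ => Real.exp (-κ * t)) (Ici 0) ν)
    (ha1 : IntegrableOn (fun t : ℝ => ∫ κ in Ici (0:ℝ), Real.exp (-κ * t) ∂ν)
      (Ioo 0 1) volume)
    (M ω : ℝ) (hω : 0 < ω)
    (u : ℝ → H) (hu : Continuous u)
    (hbound : ∀ s : ℝ, s ≤ 0 → ‖u s‖ ≤ M * Real.exp (ω * s)) :
    ∀ t : ℝ,
      IntegrableOn
        (fun s : ℝ => (∫ κ in Ici (0:ℝ), Real.exp (-κ * (t - s)) ∂ν) • u s)
        (Iio t) volume ∧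
      (∀ κ : ℝ, 0 ≤ κ →
        IntegrableOn (fun s : ℝ => Real.exp (-κ * (t - s)) • u s) (Iio t) volume) ∧
      IntegrableOn (fun κ : ℝ => ∫ s in Iio t, Real.exp (-κ * (t - s)) • u s)
        (Ici 0) ν ∧
      (∫ s in Iio t, (∫ κ in Ici (0:ℝ), Real.exp (-κ * (t - s)) ∂ν) • u s) =
        ∫ κ in Ici (0:ℝ), (∫ s in Iio t, Real.exp (-κ * (t - s)) • u s) ∂ν := by
  intro t
  have : SigmaFinite (ν.restrict (Ici 0)) :=
    sigmaFinite_of_integrable_pos (haInt 1 one_pos) fun _ => Real.exp_pos _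
  obtain ⟨C, hC₀, hC⟩ := exists_norm_le_mul_exp_of_continuous hu hω.le hbound t
  have hprod := integrable_exp_smul_prod hu hω hC₀ hC haInt ha1
  refine ⟨?_, fun κ hκ => integrableOn_exp_smul_of_norm_le hu hω hC hκ,
    hprod.integral_prod_right, ?_⟩
  · simpa only [IntegrableOn, Function.uncurry, integral_smul_const] using
      hprod.integral_prod_left
  · rw [← integral_integral_swap hprod]
    simp only [integral_smul_const]

/-- For a completely monotone kernel `a(t) = ∫ e^{-κ t} ν(dκ)` (finite for `t > 0`
and integrable near `0`) and an exponentially decaying continuous history `u`,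
the convolution `∫_{-∞}^t a(t-s) u(s) ds` is a well-defined Bochner integral, each
state variable `x(t,κ) = ∫_{-∞}^t e^{-κ(t-s)} u(s) ds` is well defined, the map
`κ ↦ x(t,κ)` is `ν`-integrable on `[0,∞)`, and
`∫_{-∞}^t a(t-s) u(s) ds = ∫ x(t,κ) ν(dκ)`. -/
theorem stmt4
    {H : Type*} [NormedAddCommGroup H] [InnerProductSpace ℝ H]
    [CompleteSpace H] [SecondCountableTopology H]
    (ν : Measure ℝ)
    (haInt : ∀ t : ℝ, 0 < t →
      IntegrableOn (fun κ : ℝ => Real.exp (-κ * t)) (Ici 0) ν)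
    (ha1 : IntegrableOn (fun t : ℝ => ∫ κ in Ici (0:ℝ), Real.exp (-κ * t) ∂ν)
      (Ioo 0 1) volume)
    (M ω : ℝ) (hM : 0 < M) (hω : 0 < ω)
    (u : ℝ → H) (hu : Continuous u)
    (hbound : ∀ s : ℝ, s ≤ 0 → ‖u s‖ ≤ M * Real.exp (ω * s)) :
    ∀ t : ℝ,
      IntegrableOn
        (fun s : ℝ => (∫ κ in Ici (0:ℝ), Real.exp (-κ * (t - s)) ∂ν) • u s)
        (Iio t) volume ∧
      (∀ κ : ℝ, 0 ≤ κ →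
        IntegrableOn (fun s : ℝ => Real.exp (-κ * (t - s)) • u s) (Iio t) volume) ∧
      IntegrableOn (fun κ : ℝ => ∫ s in Iio t, Real.exp (-κ * (t - s)) • u s)
        (Ici 0) ν ∧
      (∫ s in Iio t, (∫ κ in Ici (0:ℝ), Real.exp (-κ * (t - s)) ∂ν) • u s) =
        ∫ κ in Ici (0:ℝ), (∫ s in Iio t, Real.exp (-κ * (t - s)) • u s) ∂ν :=
  stmt4_general ν haInt ha1 M ω hω u hu hbound
end

section
/- There exists a constant c > 0, depending only on C and ‖J‖, such that for all x₁, x₂ ∈ X and z₁, z₂ ∈ Ξ*: |ψ(x₁,z₁) − ψ(x₂,z₂)| ≤ c‖z₁ − z₂‖ + c(1 + ‖z₁‖ + ‖z₂‖)(1 + ‖x₁‖ + ‖x₂‖)‖x₁ − x₂‖. -/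
/-!
For each control `γ`, the integrand `l (J x) γ + z (r (J x) γ)` moves by at most
`C‖z₁ - z₂‖ + C(1 + ‖z₂‖)(1 + ‖Jx₁‖ + ‖Jx₂‖)‖Jx₁ - Jx₂‖`, and two families that are bounded below
and pointwise within `B` of each other have infima within `B`. The constant `c = C(1 + ‖J‖)²`
absorbs the passage from `J x` to `x`.
-/

open Set

theorem setOf_exists_mem_eq_image {α β : Type*} (s : Set α) (f : α → β) :
    {y | ∃ γ ∈ s, y = f γ} = f '' s := by
  ext; simp [eq_comm]

theorem csInf_image_sub_le {α : Type*} {s : Set α} (hs : s.Nonempty) {f g : α → ℝ} {B : ℝ}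
    (hfg : ∀ γ ∈ s, f γ ≤ g γ + B) (hf : BddBelow (f '' s)) :
    sInf (f '' s) - B ≤ sInf (g '' s) := by
  refine le_csInf (hs.image g) ?_
  rintro _ ⟨γ, hγ, rfl⟩
  linarith [csInf_le hf (mem_image_of_mem f hγ), hfg γ hγ]

theorem abs_csInf_image_sub_le {α : Type*} {s : Set α} (hs : s.Nonempty) {f g : α → ℝ} {B : ℝ}
    (hfg : ∀ γ ∈ s, |f γ - g γ| ≤ B) (hf : BddBelow (f '' s)) (hg : BddBelow (g '' s)) :
    |sInf (f '' s) - sInf (g '' s)| ≤ B := by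
  have h₁ := csInf_image_sub_le (g := g) (B := B) hs
    (fun γ hγ => by linarith [(abs_le.mp (hfg γ hγ)).2]) hf
  have h₂ := csInf_image_sub_le (g := f) (B := B) hs
    (fun γ hγ => by linarith [(abs_le.mp (hfg γ hγ)).1]) hg
  rw [abs_sub_le_iff]
  constructor <;> linarith

theorem ContinuousLinearMap.one_add_norm_add_norm_mul_norm_sub_le
    {𝕜 E F : Type*} [NontriviallyNormedField 𝕜] [SeminormedAddCommGroup E] [NormedSpace 𝕜 E]
    [SeminormedAddCommGroup F] [NormedSpace 𝕜 F] (J : E →L[𝕜] F) (x y : E) :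
    (1 + ‖J x‖ + ‖J y‖) * ‖J x - J y‖ ≤ (1 + ‖J‖) ^ 2 * ((1 + ‖x‖ + ‖y‖) * ‖x - y‖) := by
  have hsum : 1 + ‖J x‖ + ‖J y‖ ≤ (1 + ‖J‖) * (1 + ‖x‖ + ‖y‖) := by
    nlinarith [J.le_opNorm x, J.le_opNorm y, norm_nonneg J, norm_nonneg x, norm_nonneg y]
  have hsub : ‖J x - J y‖ ≤ (1 + ‖J‖) * ‖x - y‖ := by
    rw [← map_sub]
    nlinarith [J.le_opNorm (x - y), norm_nonneg (x - y)]
  calc (1 + ‖J x‖ + ‖J y‖) * ‖J x - J y‖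
      ≤ ((1 + ‖J‖) * (1 + ‖x‖ + ‖y‖)) * ((1 + ‖J‖) * ‖x - y‖) := by gcongr
    _ = (1 + ‖J‖) ^ 2 * ((1 + ‖x‖ + ‖y‖) * ‖x - y‖) := by ring

theorem abs_add_apply_sub_add_apply_le {E : Type*} [SeminormedAddCommGroup E] [NormedSpace ℝ E]
    (p₁ p₂ : ℝ) (v₁ v₂ : E) (z₁ z₂ : E →L[ℝ] ℝ) :
    |(p₁ + z₁ v₁) - (p₂ + z₂ v₂)| ≤ |p₁ - p₂| + ‖z₁ - z₂‖ * ‖v₁‖ + ‖z₂‖ * ‖v₁ - v₂‖ := by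
  have hsplit : (p₁ + z₁ v₁) - (p₂ + z₂ v₂) = (p₁ - p₂) + (z₁ - z₂) v₁ + z₂ (v₁ - v₂) := by
    simp only [sub_apply, map_sub]; ring
  rw [hsplit]
  refine (abs_add_three _ _ _).trans ?_
  gcongr
  · exact (z₁ - z₂).le_opNorm v₁
  · exact z₂.le_opNorm _

section Hamiltonian

variable {H U Ξ : Type*} [SeminormedAddCommGroup H] [SeminormedAddCommGroup Ξ] [NormedSpace ℝ Ξ]
  {𝒰 : Set U} {C : ℝ} {l : H → U → ℝ} {r : H → U → Ξ}

theorem bddBelow_image_add_apply (hlLip : ∀ u u' : H, ∀ γ ∈ 𝒰,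
      |l u γ - l u' γ| ≤ C * (1 + ‖u‖ + ‖u'‖) * ‖u - u'‖)
    (hl0 : ∀ γ ∈ 𝒰, |l 0 γ| ≤ C) (hrB : ∀ u : H, ∀ γ ∈ 𝒰, ‖r u γ‖ ≤ C)
    (u : H) (z : Ξ →L[ℝ] ℝ) :
    BddBelow ((fun γ => l u γ + z (r u γ)) '' 𝒰) := by
  refine ⟨-(C + C * (1 + ‖u‖) * ‖u‖) - ‖z‖ * C, ?_⟩
  rintro _ ⟨γ, hγ, rfl⟩
  have hl := hlLip u 0 γ hγ
  simp only [norm_zero, add_zero, sub_zero] at hl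
  have hz : |z (r u γ)| ≤ ‖z‖ * C :=
    (z.le_opNorm _).trans (mul_le_mul_of_nonneg_left (hrB u γ hγ) (norm_nonneg z))
  linarith [(abs_le.mp hl).1, (abs_le.mp (hl0 γ hγ)).1, (abs_le.mp hz).1]

theorem abs_add_apply_sub_le (hlLip : ∀ u u' : H, ∀ γ ∈ 𝒰,
      |l u γ - l u' γ| ≤ C * (1 + ‖u‖ + ‖u'‖) * ‖u - u'‖)
    (hrB : ∀ u : H, ∀ γ ∈ 𝒰, ‖r u γ‖ ≤ C)
    (hrLip : ∀ u u' : H, ∀ γ ∈ 𝒰,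
      ‖r u γ - r u' γ‖ ≤ C * (1 + ‖u‖ + ‖u'‖) * ‖u - u'‖)
    (u₁ u₂ : H) (z₁ z₂ : Ξ →L[ℝ] ℝ) {γ : U} (hγ : γ ∈ 𝒰) :
    |(l u₁ γ + z₁ (r u₁ γ)) - (l u₂ γ + z₂ (r u₂ γ))| ≤
      C * ‖z₁ - z₂‖ + C * (1 + ‖z₂‖) * ((1 + ‖u₁‖ + ‖u₂‖) * ‖u₁ - u₂‖) := by
  have hl := hlLip u₁ u₂ γ hγ
  have hr := hrLip u₁ u₂ γ hγ
  have hrγ := hrB u₁ γ hγ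
  calc |(l u₁ γ + z₁ (r u₁ γ)) - (l u₂ γ + z₂ (r u₂ γ))|
      ≤ |l u₁ γ - l u₂ γ| + ‖z₁ - z₂‖ * ‖r u₁ γ‖ + ‖z₂‖ * ‖r u₁ γ - r u₂ γ‖ :=
        abs_add_apply_sub_add_apply_le _ _ _ _ _ _
    _ ≤ C * (1 + ‖u₁‖ + ‖u₂‖) * ‖u₁ - u₂‖ + ‖z₁ - z₂‖ * C
        + ‖z₂‖ * (C * (1 + ‖u₁‖ + ‖u₂‖) * ‖u₁ - u₂‖) := by gcongr
    _ = _ := by ring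

end Hamiltonian

theorem stmt9_general
    {X H U Ξ : Type*} [NormedAddCommGroup X] [NormedSpace ℝ X]
    [NormedAddCommGroup H] [InnerProductSpace ℝ H]
    [NormedAddCommGroup Ξ] [InnerProductSpace ℝ Ξ]
    (J : X →L[ℝ] H) (𝒰 : Set U) (h𝒰 : 𝒰.Nonempty)
    (C : ℝ) (hC : 0 < C)
    (l : H → U → ℝ) (r : H → U → Ξ)
    (hlLip : ∀ u u' : H, ∀ γ ∈ 𝒰,
      |l u γ - l u' γ| ≤ C * (1 + ‖u‖ + ‖u'‖) * ‖u - u'‖)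
    (hl0 : ∀ γ ∈ 𝒰, |l 0 γ| ≤ C)
    (hrB : ∀ u : H, ∀ γ ∈ 𝒰, ‖r u γ‖ ≤ C)
    (hrLip : ∀ u u' : H, ∀ γ ∈ 𝒰,
      ‖r u γ - r u' γ‖ ≤ C * (1 + ‖u‖ + ‖u'‖) * ‖u - u'‖) :
    ∃ c : ℝ, 0 < c ∧
      ∀ (x₁ x₂ : X) (z₁ z₂ : Ξ →L[ℝ] ℝ),
        |sInf {y : ℝ | ∃ γ ∈ 𝒰, y = l (J x₁) γ + z₁ (r (J x₁) γ)} -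
          sInf {y : ℝ | ∃ γ ∈ 𝒰, y = l (J x₂) γ + z₂ (r (J x₂) γ)}| ≤
        c * ‖z₁ - z₂‖ +
          c * (1 + ‖z₁‖ + ‖z₂‖) * (1 + ‖x₁‖ + ‖x₂‖) * ‖x₁ - x₂‖ := by
  refine ⟨C * (1 + ‖J‖) ^ 2, by positivity, fun x₁ x₂ z₁ z₂ => ?_⟩
  simp only [setOf_exists_mem_eq_image]
  refine abs_csInf_image_sub_le h𝒰 (fun γ hγ => ?_) (bddBelow_image_add_apply hlLip hl0 hrB _ _)
    (bddBelow_image_add_apply hlLip hl0 hrB _ _)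
  have hJ : 1 ≤ (1 + ‖J‖) ^ 2 := one_le_pow₀ (le_add_of_nonneg_right (norm_nonneg J))
  calc _ ≤ C * ‖z₁ - z₂‖ + C * (1 + ‖z₂‖) * ((1 + ‖J x₁‖ + ‖J x₂‖) * ‖J x₁ - J x₂‖) :=
        abs_add_apply_sub_le hlLip hrB hrLip _ _ z₁ z₂ hγ
    _ ≤ C * (1 + ‖J‖) ^ 2 * ‖z₁ - z₂‖
        + C * (1 + ‖z₁‖ + ‖z₂‖) * ((1 + ‖J‖) ^ 2 * ((1 + ‖x₁‖ + ‖x₂‖) * ‖x₁ - x₂‖)) := by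
      gcongr ?_ * _ + C * ?_ * ?_
      · exact le_mul_of_one_le_right hC.le hJ
      · linarith [norm_nonneg z₁]
      · exact J.one_add_norm_add_norm_mul_norm_sub_le x₁ x₂
    _ = _ := by ring

/-- Lipschitz-type estimate for the Hamiltonian
`ψ(x,z) = inf { l(Jx,γ) + z(r(Jx,γ)) : γ ∈ 𝒰 }`: there is `c > 0`, depending
only on `C` and `‖J‖`, with
`|ψ(x₁,z₁) − ψ(x₂,z₂)| ≤ c‖z₁−z₂‖ + c(1+‖z₁‖+‖z₂‖)(1+‖x₁‖+‖x₂‖)‖x₁−x₂‖`. -/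
theorem stmt9
    {X H U Ξ : Type*} [NormedAddCommGroup X] [NormedSpace ℝ X]
    [NormedAddCommGroup H] [InnerProductSpace ℝ H]
    [NormedAddCommGroup U] [InnerProductSpace ℝ U]
    [NormedAddCommGroup Ξ] [InnerProductSpace ℝ Ξ]
    (J : X →L[ℝ] H) (𝒰 : Set U) (h𝒰 : 𝒰.Nonempty)
    (C : ℝ) (hC : 0 < C)
    (l : H → U → ℝ) (r : H → U → Ξ)
    (hlLip : ∀ u u' : H, ∀ γ ∈ 𝒰,
      |l u γ - l u' γ| ≤ C * (1 + ‖u‖ + ‖u'‖) * ‖u - u'‖)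
    (hl0 : ∀ γ ∈ 𝒰, |l 0 γ| ≤ C)
    (hrB : ∀ u : H, ∀ γ ∈ 𝒰, ‖r u γ‖ ≤ C)
    (hrLip : ∀ u u' : H, ∀ γ ∈ 𝒰,
      ‖r u γ - r u' γ‖ ≤ C * (1 + ‖u‖ + ‖u'‖) * ‖u - u'‖) :
    ∃ c : ℝ, 0 < c ∧
      ∀ (x₁ x₂ : X) (z₁ z₂ : Ξ →L[ℝ] ℝ),
        |sInf {y : ℝ | ∃ γ ∈ 𝒰, y = l (J x₁) γ + z₁ (r (J x₁) γ)} -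
          sInf {y : ℝ | ∃ γ ∈ 𝒰, y = l (J x₂) γ + z₂ (r (J x₂) γ)}| ≤
        c * ‖z₁ - z₂‖ +
          c * (1 + ‖z₁‖ + ‖z₂‖) * (1 + ‖x₁‖ + ‖x₂‖) * ‖x₁ - x₂‖ :=
  stmt9_general J 𝒰 h𝒰 C hC l r hlLip hl0 hrB hrLip
end
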